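/- Each of the four matrices T₁₂⁺, T₁₂⁻, T₁, T₂ is invertible over ℤ and satisfies Mᵀ·η₅·M = η₅ (membership in the integral orthogonal group of η₅); conjugation by the generalized Weyl generators acts by inverse-transpose: (J₁₂⁺)⁻¹·T₁₂⁺·J₁₂⁺ = ((T₁₂⁺)⁻¹)ᵀ, (J₁₂⁻)⁻¹·T₁₂⁻·J₁₂⁻ = ((T₁₂⁻)⁻¹)ᵀ, and (Jᵢ)⁻¹·Tᵢ·Jᵢ = ((Tᵢ)⁻¹)ᵀ for i = 1, 2; and moreover (T₁·T₂·T₁⁻¹·T₂⁻¹)·T₁₂⁺ = (T₁₂⁺)⁻¹ and (T₁·T₂ᵀ·T₁⁻¹·(T₂ᵀ)⁻¹)·T₁₂⁻ = (T₁₂⁻)⁻¹. In particular the inverses of all four parabolic generators are words in the generators {J₁₂⁺, J₁₂⁻, J₁, J₂, T₁₂⁺, T₁₂⁻, T₁, T₂} of the discrete subgroup of SO(2,3;ℤ). -/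
import Mathlib


open Matrix

/-- The diagonal form `η₅ = diag(1,1,−1,−1,−1)` of signature `(2,3)`. -/
def eta5Z : Matrix (Fin 5) (Fin 5) ℤ :=
  !![1, 0, 0, 0, 0; 0, 1, 0, 0, 0; 0, 0, -1, 0, 0; 0, 0, 0, -1, 0; 0, 0, 0, 0, -1]

/-- The generalized Weyl generator `J₁₂⁺`. -/
def J₁₂p : Matrix (Fin 5) (Fin 5) ℤ :=
  !![0, -1, 0, 0, 0; 1, 0, 0, 0, 0; 0, 0, 0, 1, 0; 0, 0, -1, 0, 0; 0, 0, 0, 0, 1]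

/-- The generalized Weyl generator `J₁₂⁻`. -/
def J₁₂m : Matrix (Fin 5) (Fin 5) ℤ :=
  !![0, -1, 0, 0, 0; 1, 0, 0, 0, 0; 0, 0, 0, -1, 0; 0, 0, 1, 0, 0; 0, 0, 0, 0, 1]

/-- The generalized Weyl generator `J₁ = diag(1,1,−1,1,−1)`. -/
def J₁ : Matrix (Fin 5) (Fin 5) ℤ :=
  !![1, 0, 0, 0, 0; 0, 1, 0, 0, 0; 0, 0, -1, 0, 0; 0, 0, 0, 1, 0; 0, 0, 0, 0, -1]

/-- The generalized Weyl generator `J₂ = diag(1,1,1,−1,−1)`. -/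
def J₂ : Matrix (Fin 5) (Fin 5) ℤ :=
  !![1, 0, 0, 0, 0; 0, 1, 0, 0, 0; 0, 0, 1, 0, 0; 0, 0, 0, -1, 0; 0, 0, 0, 0, -1]

/-- The parabolic generator `T₁₂⁻`. -/
def T₁₂m : Matrix (Fin 5) (Fin 5) ℤ :=
  !![1, -2, 0, 2, 0; 2, 1, 2, 0, 0; 0, 2, 1, -2, 0; 2, 0, 2, 1, 0; 0, 0, 0, 0, 1]

/-- The parabolic generator `T₁₂⁺`. -/
def T₁₂p : Matrix (Fin 5) (Fin 5) ℤ :=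
  !![1, -2, 0, -2, 0; 2, 1, 2, 0, 0; 0, 2, 1, 2, 0; -2, 0, -2, 1, 0; 0, 0, 0, 0, 1]

/-- The parabolic generator `T₁`. -/
def T₁ : Matrix (Fin 5) (Fin 5) ℤ :=
  !![3, 0, 2, 0, 2; 0, 1, 0, 0, 0; -2, 0, -1, 0, -2; 0, 0, 0, 1, 0; 2, 0, 2, 0, 1]

/-- The parabolic generator `T₂`. -/
def T₂ : Matrix (Fin 5) (Fin 5) ℤ :=
  !![1, 0, 0, 0, 0; 0, 3, 0, 2, 2; 0, 0, 1, 0, 0; 0, -2, 0, -1, -2; 0, 2, 0, 2, 1]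

def T12pi : Matrix (Fin 5) (Fin 5) ℤ :=
  !![1, 2, 0, 2, 0; -2, 1, -2, 0, 0; 0, -2, 1, -2, 0; 2, 0, 2, 1, 0; 0, 0, 0, 0, 1]
def T12mi : Matrix (Fin 5) (Fin 5) ℤ :=
  !![1, 2, 0, -2, 0; -2, 1, -2, 0, 0; 0, -2, 1, 2, 0; -2, 0, -2, 1, 0; 0, 0, 0, 0, 1]
def T1i : Matrix (Fin 5) (Fin 5) ℤ :=
  !![3, 0, 2, 0, -2; 0, 1, 0, 0, 0; -2, 0, -1, 0, 2; 0, 0, 0, 1, 0; -2, 0, -2, 0, 1]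
def T2i : Matrix (Fin 5) (Fin 5) ℤ :=
  !![1, 0, 0, 0, 0; 0, 3, 0, 2, -2; 0, 0, 1, 0, 0; 0, -2, 0, -1, 2; 0, -2, 0, -2, 1]
def J12pi : Matrix (Fin 5) (Fin 5) ℤ :=
  !![0, 1, 0, 0, 0; -1, 0, 0, 0, 0; 0, 0, 0, -1, 0; 0, 0, 1, 0, 0; 0, 0, 0, 0, 1]
def J12mi : Matrix (Fin 5) (Fin 5) ℤ :=
  !![0, 1, 0, 0, 0; -1, 0, 0, 0, 0; 0, 0, 0, 1, 0; 0, 0, -1, 0, 0; 0, 0, 0, 0, 1]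

lemma hT12p1 : T₁₂p * T12pi = 1 := by decide
lemma hT12p2 : T12pi * T₁₂p = 1 := by decide
lemma hT12m1 : T₁₂m * T12mi = 1 := by decide
lemma hT12m2 : T12mi * T₁₂m = 1 := by decide
lemma hT11 : T₁ * T1i = 1 := by decide
lemma hT12 : T1i * T₁ = 1 := by decide
lemma hT21 : T₂ * T2i = 1 := by decide
lemma hT22 : T2i * T₂ = 1 := by decide
lemma hJ12p1 : J₁₂p * J12pi = 1 := by decide
lemma hJ12m1 : J₁₂m * J12mi = 1 := by decide
lemma hJ11 : J₁ * J₁ = 1 := by decide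
lemma hJ21 : J₂ * J₂ = 1 := by decide
lemma hT2T1 : T₂ᵀ * (J₂ * J₁ * T2i * J₁ * J₂) = 1 := by decide

lemma iT12p : T₁₂p⁻¹ = T12pi := Matrix.inv_eq_right_inv hT12p1
lemma iT12m : T₁₂m⁻¹ = T12mi := Matrix.inv_eq_right_inv hT12m1
lemma iT1 : T₁⁻¹ = T1i := Matrix.inv_eq_right_inv hT11
lemma iT2 : T₂⁻¹ = T2i := Matrix.inv_eq_right_inv hT21
lemma iJ12p : J₁₂p⁻¹ = J12pi := Matrix.inv_eq_right_inv hJ12p1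
lemma iJ12m : J₁₂m⁻¹ = J12mi := Matrix.inv_eq_right_inv hJ12m1
lemma iJ1 : J₁⁻¹ = J₁ := Matrix.inv_eq_right_inv hJ11
lemma iJ2 : J₂⁻¹ = J₂ := Matrix.inv_eq_right_inv hJ21
lemma iT2T : (T₂ᵀ)⁻¹ = J₂ * J₁ * T2i * J₁ * J₂ := Matrix.inv_eq_right_inv hT2T1

/-- **Parabolic generators of the discrete subgroup of `SO(2,3;ℤ)`.**
Each `T` is invertible over `ℤ` and satisfies `Tᵀ·η₅·T = η₅`; the generalized Weyl
generators conjugate each `T` to its inverse-transpose; the commutator relations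
`(T₁T₂T₁⁻¹T₂⁻¹)·T₁₂⁺ = (T₁₂⁺)⁻¹` and `(T₁T₂ᵀT₁⁻¹(T₂ᵀ)⁻¹)·T₁₂⁻ = (T₁₂⁻)⁻¹` hold; and
the inverses of the four parabolic generators are words in the eight generators. -/
theorem stmt_19 :
    IsUnit T₁₂p ∧ IsUnit T₁₂m ∧ IsUnit T₁ ∧ IsUnit T₂ ∧
    T₁₂pᵀ * eta5Z * T₁₂p = eta5Z ∧ T₁₂mᵀ * eta5Z * T₁₂m = eta5Z ∧
    T₁ᵀ * eta5Z * T₁ = eta5Z ∧ T₂ᵀ * eta5Z * T₂ = eta5Z ∧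
    J₁₂p⁻¹ * T₁₂p * J₁₂p = (T₁₂p⁻¹)ᵀ ∧
    J₁₂m⁻¹ * T₁₂m * J₁₂m = (T₁₂m⁻¹)ᵀ ∧
    J₁⁻¹ * T₁ * J₁ = (T₁⁻¹)ᵀ ∧
    J₂⁻¹ * T₂ * J₂ = (T₂⁻¹)ᵀ ∧
    (T₁ * T₂ * T₁⁻¹ * T₂⁻¹) * T₁₂p = T₁₂p⁻¹ ∧
    (T₁ * T₂ᵀ * T₁⁻¹ * (T₂ᵀ)⁻¹) * T₁₂m = T₁₂m⁻¹ ∧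
    T₁₂p⁻¹ ∈ Submonoid.closure
      ({J₁₂p, J₁₂m, J₁, J₂, T₁₂p, T₁₂m, T₁, T₂} : Set (Matrix (Fin 5) (Fin 5) ℤ)) ∧
    T₁₂m⁻¹ ∈ Submonoid.closure
      ({J₁₂p, J₁₂m, J₁, J₂, T₁₂p, T₁₂m, T₁, T₂} : Set (Matrix (Fin 5) (Fin 5) ℤ)) ∧
    T₁⁻¹ ∈ Submonoid.closure
      ({J₁₂p, J₁₂m, J₁, J₂, T₁₂p, T₁₂m, T₁, T₂} : Set (Matrix (Fin 5) (Fin 5) ℤ)) ∧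
    T₂⁻¹ ∈ Submonoid.closure
      ({J₁₂p, J₁₂m, J₁, J₂, T₁₂p, T₁₂m, T₁, T₂} : Set (Matrix (Fin 5) (Fin 5) ℤ)) := by
  have memgen : ∀ M ∈ ({J₁₂p, J₁₂m, J₁, J₂, T₁₂p, T₁₂m, T₁, T₂} : Set (Matrix (Fin 5) (Fin 5) ℤ)),
      M ∈ Submonoid.closure ({J₁₂p, J₁₂m, J₁, J₂, T₁₂p, T₁₂m, T₁, T₂} : Set (Matrix (Fin 5) (Fin 5) ℤ)) :=
    fun M hM => Submonoid.subset_closure hM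
  refine ⟨⟨⟨T₁₂p, T12pi, hT12p1, hT12p2⟩, rfl⟩, ⟨⟨T₁₂m, T12mi, hT12m1, hT12m2⟩, rfl⟩,
    ⟨⟨T₁, T1i, hT11, hT12⟩, rfl⟩, ⟨⟨T₂, T2i, hT21, hT22⟩, rfl⟩,
    by decide, by decide, by decide, by decide,
    by rw [iJ12p, iT12p]; decide,
    by rw [iJ12m, iT12m]; decide,
    by rw [iJ1, iT1]; decide,
    by rw [iJ2, iT2]; decide,
    by rw [iT1, iT2, iT12p]; decide,
    by rw [iT1, iT2T, iT12m]; decide,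
    ?_, ?_, ?_, ?_⟩
  · have h : T₁₂p⁻¹ = T₁ * (T₂ * (J₂ * (T₁ * (J₂ * (J₁ * (T₂ * (J₁ * T₁₂p))))))) := by
      rw [iT12p]; decide
    rw [h]
    exact mul_mem (memgen _ (by simp)) (mul_mem (memgen _ (by simp)) (mul_mem (memgen _ (by simp))
      (mul_mem (memgen _ (by simp)) (mul_mem (memgen _ (by simp)) (mul_mem (memgen _ (by simp))
      (mul_mem (memgen _ (by simp)) (mul_mem (memgen _ (by simp)) (memgen _ (by simp)))))))))
  · have h : T₁₂m⁻¹ = T₁ * (J₂ * (J₁ * (T₂ * (J₁ * (T₁ * (T₂ * (J₂ * T₁₂m))))))) := by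
      rw [iT12m]; decide
    rw [h]
    exact mul_mem (memgen _ (by simp)) (mul_mem (memgen _ (by simp)) (mul_mem (memgen _ (by simp))
      (mul_mem (memgen _ (by simp)) (mul_mem (memgen _ (by simp)) (mul_mem (memgen _ (by simp))
      (mul_mem (memgen _ (by simp)) (mul_mem (memgen _ (by simp)) (memgen _ (by simp)))))))))
  · have h : T₁⁻¹ = J₂ * (T₁ * J₂) := by rw [iT1]; decide
    rw [h]
    exact mul_mem (memgen _ (by simp)) (mul_mem (memgen _ (by simp)) (memgen _ (by simp)))
  · have h : T₂⁻¹ = J₁ * (T₂ * J₁) := by rw [iT2]; decide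
    rw [h]
    exact mul_mem (memgen _ (by simp)) (mul_mem (memgen _ (by simp)) (memgen _ (by simp)))
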